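/- arXiv:2603.05967 — 2 statements merged into one kernel-verified Lean document; each statement's English description precedes it below -/
import Mathlib

section
/- If h : Γ → ℝ≥0 is ∞-harmonic (with respect to the truncated kernels μ̄_x), then the function f : ST → ℝ≥0 defined by f((x,m)) = h(x) if m = |x|_μ and f((x,m)) = 0 otherwise, is space-time harmonic. -/
open Filter Topology
open scoped Classical

/-- n-fold convolution power of a measure `μ` on a group, with `μ^{*0} = δ_e`. -/
noncomputable def convPow {G : Type*} [Group G] (μ : G → ℝ) : ℕ → G → ℝ
  | 0 => fun x => if x = 1 then 1 else 0
  | n + 1 => fun x => ∑ᶠ y, convPow μ n y * μ (y⁻¹ * x)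

/-- The word semi-norm `|x|_μ = inf {n : μ^{*n}(x) > 0}`. -/
noncomputable def munorm {G : Type*} [Group G] (μ : G → ℝ) (x : G) : ℕ :=
  sInf {n | 0 < convPow μ n x}

/-- A function on the space-time set `ST = {(x,m) : P^m(e,x) > 0}` is space-time
harmonic if `f((x,m)) = Σ_y μ(x⁻¹y) f((y,m+1))` at every point of `ST`. -/
def STHarmonic {G : Type*} [Group G] (μ : G → ℝ) (f : G × ℕ → ℝ) : Prop :=
  ∀ (x : G) (m : ℕ), 0 < convPow μ m x →
    f (x, m) = ∑ᶠ y : G, μ (x⁻¹ * y) * f (y, m + 1)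

/-- The truncated sub-Markov kernel `μ̄_x(y)`. -/
noncomputable def truncKernel {G : Type*} [Group G] (μ : G → ℝ) (x y : G) : ℝ :=
  if munorm μ y = munorm μ x + 1 then μ (x⁻¹ * y) else 0

/-- `h` is ∞-harmonic: `h(x) = Σ_y μ̄_x(y) h(y)`. -/
def InfHarmonic {G : Type*} [Group G] (μ : G → ℝ) (h : G → ℝ) : Prop :=
  ∀ x : G, h x = ∑ᶠ y : G, truncKernel μ x y * h y


/-!
On a point `(x, m)` of space-time we have `|x|_μ ≤ m`, and one step of the walk raises the
word semi-norm by at most one. At level `m = |x|_μ` the space-time sum therefore keeps exactly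
the neighbours with `|y|_μ = |x|_μ + 1`, i.e. it is the truncated sum defining ∞-harmonicity;
above that level every neighbour satisfies `|y|_μ ≤ |x|_μ + 1 < m + 1`, so the sum vanishes.
-/

open Function

section

variable {G : Type*} [Group G] {μ : G → ℝ}

lemma convPow_nonneg (hnn : ∀ x, 0 ≤ μ x) : ∀ n x, 0 ≤ convPow μ n x
  | 0, x => by simp only [convPow]; split <;> norm_num
  | n + 1, _ => finsum_nonneg fun y => mul_nonneg (convPow_nonneg hnn n y) (hnn _)

lemma finite_support_convPow (hfin : (support μ).Finite) :
    ∀ n, (support (convPow μ n)).Finite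
  | 0 => (Set.finite_singleton 1).subset fun x hx => by
      by_contra hne
      simp_all [convPow]
  | n + 1 => ((finite_support_convPow hfin n).mul hfin).subset fun x hx => by
      obtain ⟨y, hy⟩ : ∃ y, convPow μ n y * μ (y⁻¹ * x) ≠ 0 := by
        by_contra! hall
        exact hx (finsum_eq_zero_of_forall_eq_zero hall)
      exact ⟨y, left_ne_zero_of_mul hy, y⁻¹ * x, right_ne_zero_of_mul hy, mul_inv_cancel_left y x⟩

lemma convPow_succ_pos (hnn : ∀ x, 0 ≤ μ x) (hfin : (support μ).Finite) {n : ℕ} {x y : G}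
    (hx : 0 < convPow μ n x) (hxy : 0 < μ (x⁻¹ * y)) : 0 < convPow μ (n + 1) y := by
  have hsupp : (support fun z => convPow μ n z * μ (z⁻¹ * y)).Finite :=
    (finite_support_convPow hfin n).subset fun z hz => left_ne_zero_of_mul hz
  calc 0 < convPow μ n x * μ (x⁻¹ * y) := mul_pos hx hxy
    _ ≤ ∑ᶠ z, convPow μ n z * μ (z⁻¹ * y) :=
      single_le_finsum x hsupp fun z => mul_nonneg (convPow_nonneg hnn n z) (hnn _)

lemma munorm_le {n : ℕ} {x : G} (hx : 0 < convPow μ n x) : munorm μ x ≤ n :=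
  Nat.sInf_le hx

lemma convPow_munorm_pos {n : ℕ} {x : G} (hx : 0 < convPow μ n x) :
    0 < convPow μ (munorm μ x) x :=
  Nat.sInf_mem (s := {k | 0 < convPow μ k x}) ⟨n, hx⟩

lemma munorm_le_munorm_add_one (hnn : ∀ x, 0 ≤ μ x) (hfin : (support μ).Finite) {n : ℕ}
    {x y : G} (hx : 0 < convPow μ n x) (hxy : 0 < μ (x⁻¹ * y)) :
    munorm μ y ≤ munorm μ x + 1 :=
  munorm_le (convPow_succ_pos hnn hfin (convPow_munorm_pos hx) hxy)

noncomputable def levelLift (μ : G → ℝ) (h : G → ℝ) : G × ℕ → ℝ :=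
  fun p => if p.2 = munorm μ p.1 then h p.1 else 0

lemma truncKernel_mul_eq (h : G → ℝ) (x y : G) :
    truncKernel μ x y * h y = μ (x⁻¹ * y) * levelLift μ h (y, munorm μ x + 1) := by
  by_cases hy : munorm μ y = munorm μ x + 1
  · simp [truncKernel, levelLift, hy]
  · simp [truncKernel, levelLift, hy, Ne.symm hy]

lemma InfHarmonic.stHarmonic_levelLift (hnn : ∀ x, 0 ≤ μ x) (hfin : (support μ).Finite)
    {h : G → ℝ} (hh : InfHarmonic μ h) : STHarmonic μ (levelLift μ h) := by
  intro x m hm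
  rcases (munorm_le hm).eq_or_lt with hlevel | habove
  · subst hlevel
    simp only [levelLift, if_true]
    exact (hh x).trans (finsum_congr (truncKernel_mul_eq h x))
  · have hx : levelLift μ h (x, m) = 0 := if_neg habove.ne'
    rw [hx, eq_comm]
    refine finsum_eq_zero_of_forall_eq_zero fun y => ?_
    rcases (hnn (x⁻¹ * y)).eq_or_lt with hzero | hpos
    · rw [← hzero, zero_mul]
    · have hy := munorm_le_munorm_add_one hnn hfin hm hpos
      simp only [levelLift, if_neg (show m + 1 ≠ munorm μ y by omega), mul_zero]

end

theorem infty_harmonic_gives_spaceTime_harmonic_general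
    {G : Type*} [Group G] (μ : G → ℝ)
    (hnn : ∀ x, 0 ≤ μ x)
    (hfin : (Function.support μ).Finite)
    (h : G → ℝ) (hh : InfHarmonic μ h) :
    STHarmonic μ (fun p => if p.2 = munorm μ p.1 then h p.1 else 0) :=
  hh.stHarmonic_levelLift hnn hfin

theorem infty_harmonic_gives_spaceTime_harmonic
    {G : Type*} [Group G] [Countable G] (μ : G → ℝ)
    (hnn : ∀ x, 0 ≤ μ x) (hprob : ∑ᶠ x, μ x = 1)
    (hfin : (Function.support μ).Finite) (hlazy : 0 < μ 1)
    (hadm : ∀ x : G, ∃ n, 0 < convPow μ n x)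
    (h : G → ℝ) (hh0 : ∀ x, 0 ≤ h x) (hh : InfHarmonic μ h) :
    STHarmonic μ (fun p => if p.2 = munorm μ p.1 then h p.1 else 0) :=
  infty_harmonic_gives_spaceTime_harmonic_general μ hnn hfin h hh
end

section
/- In the group Γ = F_2 × ℤ/2ℤ with μ as above, the three functions h_0, h_1, h_2 : Γ → ℝ≥0 defined by: h_0(x) = ((1−α)/6)^{−|x|} if x ∈ H_0 := {(e,0)} ∪ {(ab^n,0) : n ≥ 0} and 0 otherwise; h_1(x) = ((1−α)/6)^{−|x|} if x ∈ H_1 := {(e,0)} ∪ {(ab^n,1) : n ≥ 0} and 0 otherwise; and h_2 = (h_0 + h_1)/2; are each ∞-harmonic and normalized, and h_2 is not a minimal ∞-harmonic function. -/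
/-!
With `t = (1 - α) / 6`, each `hᵢ` is `t^{-|x|}` restricted to a geodesic ray
`1, (a, z), (ab, z), (ab², z), …` of `Γ`. A point of the ray has exactly one μ̄-successor on
the ray, reached by a step of weight `t`, so the harmonic equation there reads
`t^{-n} = t · t^{-(n+1)}`. A point off the ray has no μ̄-successor on it: the reduced word
`a b^(n+1)` can only lose a letter by deleting its final `b`. Finally `h₀ ≤ 2 h₂`, but `h₀` is
not a multiple of `h₂` because `h₀ ≠ h₁`.
-/

open scoped Classical

/-- The group Γ = F₂ × ℤ/2ℤ. -/
abbrev Gamma2 : Type := FreeGroup (Fin 2) × Multiplicative (ZMod 2)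

def ga : FreeGroup (Fin 2) := FreeGroup.of 0
def gb : FreeGroup (Fin 2) := FreeGroup.of 1
def z0 : Multiplicative (ZMod 2) := Multiplicative.ofAdd 0
def z1 : Multiplicative (ZMod 2) := Multiplicative.ofAdd 1

/-- The generating set `S = {(a,0),(b,0),(a⁻¹,0),(b⁻¹,0),(a,1),(a⁻¹,1)}`. -/
def Sgen : Set Gamma2 :=
  {(ga, z0), (gb, z0), (ga⁻¹, z0), (gb⁻¹, z0), (ga, z1), (ga⁻¹, z1)}

/-- Word length with respect to the generating set `S`. -/
noncomputable def wl (x : Gamma2) : ℕ :=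
  sInf {n | ∃ l : List Gamma2, l.length = n ∧ (∀ s ∈ l, s ∈ Sgen) ∧ l.prod = x}

/-- The measure `μ = α δ_{(e,0)} + ((1-α)/6) Σ_{s ∈ S} δ_s`. -/
noncomputable def mu2 (α : ℝ) (x : Gamma2) : ℝ :=
  α * (if x = 1 then 1 else 0) + ((1 - α) / 6) * (if x ∈ Sgen then 1 else 0)

/-- The truncated kernel `μ̄_x(y)` built from the word norm. -/
noncomputable def truncKernel2 (α : ℝ) (x y : Gamma2) : ℝ :=
  if wl y = wl x + 1 then mu2 α (x⁻¹ * y) else 0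

/-- ∞-harmonicity with respect to the truncated kernels. -/
def InfHarmonic2 (α : ℝ) (h : Gamma2 → ℝ) : Prop :=
  ∀ x : Gamma2, h x = ∑ᶠ y : Gamma2, truncKernel2 α x y * h y

/-- A normalized ∞-harmonic `h` is minimal if every normalized non-negative
∞-harmonic `g` with `g ≤ C·h` for some `C > 0` equals `c·h` for some `c > 0`. -/
def MinimalInfHarmonic2 (α : ℝ) (h : Gamma2 → ℝ) : Prop :=
  ∀ g : Gamma2 → ℝ, (∀ x, 0 ≤ g x) → g 1 = 1 → InfHarmonic2 α g →
    (∃ C > 0, ∀ x, g x ≤ C * h x) → ∃ c > 0, ∀ x, g x = c * h x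

/-- The set `H₀ = {(e,0)} ∪ {(ab^n, 0) : n ≥ 0}`. -/
def H0set : Set Gamma2 := {x | x = 1 ∨ ∃ n : ℕ, x = (ga * gb ^ n, z0)}

/-- The set `H₁ = {(e,0)} ∪ {(ab^n, 1) : n ≥ 0}`. -/
def H1set : Set Gamma2 := {x | x = 1 ∨ ∃ n : ℕ, x = (ga * gb ^ n, z1)}

noncomputable def h0fun (α : ℝ) (x : Gamma2) : ℝ :=
  if x ∈ H0set then (((1 - α) / 6)⁻¹) ^ (wl x) else 0

noncomputable def h1fun (α : ℝ) (x : Gamma2) : ℝ :=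
  if x ∈ H1set then (((1 - α) / 6)⁻¹) ^ (wl x) else 0

noncomputable def h2fun (α : ℝ) (x : Gamma2) : ℝ := (h0fun α x + h1fun α x) / 2

namespace FreeGroup

lemma norm_mk_of_isReduced {α : Type*} [DecidableEq α] {L : List (α × Bool)} (h : IsReduced L) :
    norm (mk L) = L.length := by
  rw [norm, toWord_mk, h.reduce_eq]

lemma isReduced_cons_replicate {α : Type*} {a b : α × Bool} (hab : a.1 = b.1 → a.2 = b.2)
    (n : ℕ) : IsReduced (a :: List.replicate n b) := by
  cases n with
  | zero => exact .singleton
  | succ n =>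
    exact isReduced_cons_cons.2 ⟨hab, List.isChain_replicate_of_rel (n + 1) fun _ => rfl⟩

end FreeGroup

lemma ga_mul_gb_pow_eq_mk (n : ℕ) :
    ga * gb ^ n = FreeGroup.mk ((0, true) :: List.replicate n (1, true)) := by
  change FreeGroup.mk _ * FreeGroup.mk _ ^ n = _
  rw [FreeGroup.pow_mk, List.flatten_replicate_singleton, FreeGroup.mul_mk]
  rfl

lemma norm_ga_mul_gb_pow (n : ℕ) : (ga * gb ^ n).norm = n + 1 := by
  rw [ga_mul_gb_pow_eq_mk,
    FreeGroup.norm_mk_of_isReduced (FreeGroup.isReduced_cons_replicate (by simp) n)]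
  simp

lemma norm_ga_mul_gb_pow_succ_mul_mk (n : ℕ) {c : Fin 2 × Bool} (hc : c ≠ (1, false)) :
    (ga * gb ^ (n + 1) * FreeGroup.mk [c]).norm = n + 3 := by
  have hred :
      FreeGroup.IsReduced ((0, true) :: List.replicate n (1, true) ++ [(1, true)] ++ [c]) := by
    refine .append_overlap ?_ ?_ (List.cons_ne_nil _ _)
    · rw [List.cons_append, ← List.replicate_succ']
      exact FreeGroup.isReduced_cons_replicate (by simp) _
    · refine FreeGroup.isReduced_cons_cons.2 ⟨fun h => ?_, .singleton⟩
      grind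
  rw [ga_mul_gb_pow_eq_mk, FreeGroup.mul_mk, List.replicate_succ', ← List.cons_append,
    FreeGroup.norm_mk_of_isReduced hred]
  simp

lemma z0_eq_one : z0 = 1 := rfl

lemma z_eq_z0_or_z1 (z : Multiplicative (ZMod 2)) : z = z0 ∨ z = z1 := by revert z; decide

lemma closure_Sgen_eq_top : Subgroup.closure Sgen = ⊤ := by
  set G := Subgroup.closure Sgen
  have hfst : ∀ w, (w, (1 : Multiplicative (ZMod 2))) ∈ G := by
    intro w
    induction w using FreeGroup.induction_on with
    | C1 => exact G.one_mem
    | of i =>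
      fin_cases i
      exacts [Subgroup.subset_closure (Or.inl rfl), Subgroup.subset_closure (Or.inr (Or.inl rfl))]
    | inv_of i hi => simpa using G.inv_mem hi
    | mul x y hx hy => simpa using G.mul_mem hx hy
  have hz1 : ((1 : FreeGroup (Fin 2)), z1) ∈ G := by
    simpa using G.mul_mem (Subgroup.subset_closure (show (ga, z1) ∈ Sgen by simp [Sgen]))
      (G.inv_mem (hfst ga))
  refine eq_top_iff.2 fun ⟨w, z⟩ _ => ?_
  rcases z_eq_z0_or_z1 z with rfl | rfl
  · exact hfst w
  · simpa using G.mul_mem (hfst w) hz1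

lemma inv_mem_Sgen {s : Gamma2} (hs : s ∈ Sgen) : s⁻¹ ∈ Sgen := by
  rcases hs with rfl | rfl | rfl | rfl | rfl | rfl <;> simp [Sgen] <;> decide

lemma exists_list_prod_eq (x : Gamma2) :
    ∃ l : List Gamma2, (∀ s ∈ l, s ∈ Sgen) ∧ l.prod = x := by
  have hx : x ∈ (Subgroup.closure Sgen).toSubmonoid := by simp [closure_Sgen_eq_top]
  rw [Subgroup.closure_toSubmonoid,
    Set.union_eq_left.2 fun s hs => by simpa using inv_mem_Sgen hs] at hx
  exact Submonoid.exists_list_of_mem_closure hx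

lemma wl_prod_le_length {l : List Gamma2} (hl : ∀ s ∈ l, s ∈ Sgen) : wl l.prod ≤ l.length :=
  Nat.sInf_le ⟨l, rfl, hl, rfl⟩

lemma exists_list_length_eq_wl (x : Gamma2) :
    ∃ l : List Gamma2, l.length = wl x ∧ (∀ s ∈ l, s ∈ Sgen) ∧ l.prod = x := by
  obtain ⟨l, hl, hx⟩ := exists_list_prod_eq x
  exact Nat.sInf_mem
    (s := {n | ∃ l : List Gamma2, l.length = n ∧ (∀ s ∈ l, s ∈ Sgen) ∧ l.prod = x})
    ⟨l.length, l, rfl, hl, hx⟩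

lemma wl_one : wl 1 = 0 := Nat.le_zero.1 (wl_prod_le_length (l := []) (by simp))

lemma eq_one_of_wl_eq_zero {x : Gamma2} (h : wl x = 0) : x = 1 := by
  obtain ⟨l, hlen, -, rfl⟩ := exists_list_length_eq_wl x
  rw [List.eq_nil_of_length_eq_zero (hlen.trans h), List.prod_nil]

lemma norm_fst_prod_le_length {l : List Gamma2} (hl : ∀ s ∈ l, s ∈ Sgen) :
    l.prod.1.norm ≤ l.length := by
  induction l with
  | nil => simp
  | cons s l ih =>
    have hs : s.1.norm = 1 := by
      rcases hl s List.mem_cons_self with rfl | rfl | rfl | rfl | rfl | rfl <;>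
        simp [ga, gb, FreeGroup.norm_of, FreeGroup.norm_inv_eq]
    rw [List.prod_cons, Prod.fst_mul, List.length_cons]
    grw [FreeGroup.norm_mul_le, hs, ih fun t ht => hl t (List.mem_cons_of_mem s ht)]
    omega

lemma norm_fst_le_wl (x : Gamma2) : x.1.norm ≤ wl x := by
  obtain ⟨l, hlen, hl, rfl⟩ := exists_list_length_eq_wl x
  exact hlen ▸ norm_fst_prod_le_length hl

lemma wl_mul_le {x s : Gamma2} (hs : s ∈ Sgen) : wl (x * s) ≤ wl x + 1 := by
  obtain ⟨l, hlen, hl, rfl⟩ := exists_list_length_eq_wl x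
  have hls : ∀ t ∈ l ++ [s], t ∈ Sgen := by
    simp only [List.mem_append, List.mem_singleton]
    rintro t (ht | rfl)
    exacts [hl t ht, hs]
  simpa [hlen] using wl_prod_le_length hls

lemma ga_mem_Sgen (z : Multiplicative (ZMod 2)) : (ga, z) ∈ Sgen := by
  rcases z_eq_z0_or_z1 z with rfl | rfl <;> simp [Sgen]

lemma one_notMem_Sgen : (1 : Gamma2) ∉ Sgen := by
  simp [Sgen]
  decide

section Kernel

variable {α : ℝ}

lemma truncKernel2_of_inv_mul_mem_Sgen {x y : Gamma2} (hwl : wl y = wl x + 1)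
    (hs : x⁻¹ * y ∈ Sgen) : truncKernel2 α x y = (1 - α) / 6 := by
  have hne : x⁻¹ * y ≠ 1 := fun h => one_notMem_Sgen (h ▸ hs)
  simp [truncKernel2, mu2, hwl, hs, hne]

lemma wl_eq_and_inv_mul_mem_Sgen_of_truncKernel2_ne_zero {x y : Gamma2}
    (h : truncKernel2 α x y ≠ 0) : wl y = wl x + 1 ∧ x⁻¹ * y ∈ Sgen := by
  have hwl : wl y = wl x + 1 := by
    by_contra hwl
    simp [truncKernel2, hwl] at h
  refine ⟨hwl, by_contra fun hs => h ?_⟩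
  have hne : x⁻¹ * y ≠ 1 := by
    rw [Ne, inv_mul_eq_one]
    rintro rfl
    omega
  simp [truncKernel2, hwl, mu2, hne, hs]

lemma hasFiniteSupport_truncKernel2 (x : Gamma2) :
    Function.HasFiniteSupport (truncKernel2 α x) := by
  have hS : Sgen.Finite := by unfold Sgen; exact Set.toFinite _
  refine (hS.image (x * ·)).subset fun y hy => ⟨x⁻¹ * y, ?_, mul_inv_cancel_left x y⟩
  exact (wl_eq_and_inv_mul_mem_Sgen_of_truncKernel2_ne_zero hy).2

lemma InfHarmonic2.add {f g : Gamma2 → ℝ} (hf : InfHarmonic2 α f) (hg : InfHarmonic2 α g) :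
    InfHarmonic2 α (f + g) := by
  intro x
  simp only [Pi.add_apply, mul_add]
  rw [finsum_add_distrib ((hasFiniteSupport_truncKernel2 x).fun_mul_left f)
    ((hasFiniteSupport_truncKernel2 x).fun_mul_left g), ← hf x, ← hg x]

lemma InfHarmonic2.div_const {f : Gamma2 → ℝ} (hf : InfHarmonic2 α f) (c : ℝ) :
    InfHarmonic2 α (fun x => f x / c) := by
  intro x
  dsimp only
  rw [hf x]
  simp only [div_eq_mul_inv, finsum_mul, mul_assoc]

theorem infHarmonic2_indicator_range (hα : α ≠ 1) {p : ℕ → Gamma2}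
    (hwl : ∀ n, wl (p n) = n) (hstep : ∀ n, (p n)⁻¹ * p (n + 1) ∈ Sgen)
    (hpred : ∀ x n, wl (p n) = wl x + 1 → x⁻¹ * p n ∈ Sgen → x ∈ Set.range p) :
    InfHarmonic2 α ((Set.range p).indicator fun x => ((1 - α) / 6)⁻¹ ^ wl x) := by
  set h := (Set.range p).indicator fun x => ((1 - α) / 6)⁻¹ ^ wl x with h_def
  have hsupp : ∀ x y, truncKernel2 α x y * h y ≠ 0 →
      ∃ m, y = p m ∧ m = wl x + 1 ∧ x⁻¹ * p m ∈ Sgen := by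
    intro x y hxy
    obtain ⟨m, rfl⟩ := Set.mem_of_indicator_ne_zero (right_ne_zero_of_mul hxy)
    obtain ⟨hm, hs⟩ :=
      wl_eq_and_inv_mul_mem_Sgen_of_truncKernel2_ne_zero (left_ne_zero_of_mul hxy)
    exact ⟨m, rfl, hwl m ▸ hm, hs⟩
  intro x
  by_cases hx : x ∈ Set.range p
  · obtain ⟨n, rfl⟩ := hx
    have ht : (1 - α) / 6 ≠ 0 := fun ht => hα (by linarith)
    rw [finsum_eq_single _ (p (n + 1)) fun y hy => by_contra fun hne => ?_]
    · rw [h_def, Set.indicator_of_mem (Set.mem_range_self _),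
        Set.indicator_of_mem (Set.mem_range_self _),
        truncKernel2_of_inv_mul_mem_Sgen (by rw [hwl, hwl]) (hstep n), hwl, hwl, pow_succ]
      field_simp
    · obtain ⟨m, rfl, hm, -⟩ := hsupp _ y hne
      exact hy (by rw [hm, hwl])
  · rw [h_def, Set.indicator_of_notMem hx, eq_comm]
    refine finsum_eq_zero_of_forall_eq_zero fun y => by_contra fun hne => hx ?_
    obtain ⟨m, rfl, hm, hs⟩ := hsupp x y hne
    exact hpred x m (by rw [hwl, hm]) hs

theorem not_minimalInfHarmonic2_midpoint {g₁ g₂ : Gamma2 → ℝ} (hg₁ : InfHarmonic2 α g₁)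
    (hg₁_nonneg : ∀ x, 0 ≤ g₁ x) (hg₂_nonneg : ∀ x, 0 ≤ g₂ x) (hg₁_one : g₁ 1 = 1)
    (hg₂_one : g₂ 1 = 1) (hne : g₁ ≠ g₂) :
    ¬ MinimalInfHarmonic2 α (fun x => (g₁ x + g₂ x) / 2) := by
  intro hmin
  obtain ⟨c, -, hc⟩ :=
    hmin g₁ hg₁_nonneg hg₁_one hg₁ ⟨2, two_pos, fun x => by linarith [hg₂_nonneg x]⟩
  have hc1 : c = 1 := by simpa [hg₁_one, hg₂_one] using (hc 1).symm
  exact hne (funext fun x => by linarith [hc x, hc1 ▸ hc x])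

end Kernel

def abRay (z : Multiplicative (ZMod 2)) : ℕ → Gamma2
  | 0 => 1
  | n + 1 => (ga * gb ^ n, z)

section Ray

variable (z : Multiplicative (ZMod 2))

lemma range_abRay : Set.range (abRay z) = {x | x = 1 ∨ ∃ n : ℕ, x = (ga * gb ^ n, z)} := by
  ext x
  constructor
  · rintro ⟨_ | n, rfl⟩
    exacts [Or.inl rfl, Or.inr ⟨n, rfl⟩]
  · rintro (rfl | ⟨n, rfl⟩)
    exacts [⟨0, rfl⟩, ⟨n + 1, rfl⟩]

lemma abRay_inv_mul_succ_mem_Sgen (n : ℕ) : (abRay z n)⁻¹ * abRay z (n + 1) ∈ Sgen := by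
  cases n with
  | zero => simpa [abRay] using ga_mem_Sgen z
  | succ n =>
    have : (abRay z (n + 1))⁻¹ * abRay z (n + 2) = (gb, z0) := by
      simp [abRay, pow_succ, mul_assoc, z0_eq_one]
    rw [this]
    exact Or.inr (Or.inl rfl)

lemma wl_abRay (n : ℕ) : wl (abRay z n) = n := by
  refine le_antisymm ?_ ?_
  · induction n with
    | zero => exact wl_one.le
    | succ n ih =>
      calc wl (abRay z (n + 1))
          = wl (abRay z n * ((abRay z n)⁻¹ * abRay z (n + 1))) := by rw [mul_inv_cancel_left]
        _ ≤ n + 1 := (wl_mul_le (abRay_inv_mul_succ_mem_Sgen z n)).trans (by omega)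
  · cases n with
    | zero => exact Nat.zero_le _
    | succ n => exact (norm_ga_mul_gb_pow n).symm.le.trans (norm_fst_le_wl (abRay z (n + 1)))

lemma mem_range_abRay_of_inv_mul_mem_Sgen {x : Gamma2} {n : ℕ}
    (hwl : wl (abRay z n) = wl x + 1) (hs : x⁻¹ * abRay z n ∈ Sgen) :
    x ∈ Set.range (abRay z) := by
  rw [wl_abRay] at hwl
  obtain _ | _ | m := n
  · omega
  · exact ⟨0, (eq_one_of_wl_eq_zero (by omega)).symm⟩
  set s := x⁻¹ * abRay z (m + 2)
  have hx : x = (ga * gb ^ (m + 1) * s.1⁻¹, z * s.2⁻¹) :=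
    calc x = abRay z (m + 2) * s⁻¹ := by simp [s]
      _ = _ := rfl
  -- Unless the step `s` deletes the final `b`, `x.1` is a reduced word longer than `wl x`.
  have hlong : ∀ c ≠ (1, false), x.1 ≠ ga * gb ^ (m + 1) * FreeGroup.mk [c] := by
    intro c hc h
    have := norm_fst_le_wl x
    rw [h, norm_ga_mul_gb_pow_succ_mul_mk m hc] at this
    omega
  rcases hs with hs | hs | hs | hs | hs | hs <;> rw [hs] at hx
  · exact absurd (congrArg Prod.fst hx) (hlong (0, false) (by decide))
  · refine ⟨m + 1, ?_⟩
    simp [hx, abRay, pow_succ, mul_assoc, z0_eq_one]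
  · exact absurd (congrArg Prod.fst hx) (hlong (0, true) (by decide))
  · exact absurd (congrArg Prod.fst hx) (hlong (1, true) (by decide))
  · exact absurd (congrArg Prod.fst hx) (hlong (0, false) (by decide))
  · exact absurd (congrArg Prod.fst hx) (hlong (0, true) (by decide))

end Ray

noncomputable def rayFun (α : ℝ) (z : Multiplicative (ZMod 2)) : Gamma2 → ℝ :=
  (Set.range (abRay z)).indicator fun x => ((1 - α) / 6)⁻¹ ^ wl x

section RayFun

variable {α : ℝ}

lemma h0fun_eq_rayFun : h0fun α = rayFun α z0 := by
  rw [rayFun, range_abRay]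
  rfl

lemma h1fun_eq_rayFun : h1fun α = rayFun α z1 := by
  rw [rayFun, range_abRay]
  rfl

lemma infHarmonic2_rayFun (hα : α ≠ 1) (z : Multiplicative (ZMod 2)) :
    InfHarmonic2 α (rayFun α z) :=
  infHarmonic2_indicator_range hα (wl_abRay z) (abRay_inv_mul_succ_mem_Sgen z)
    fun _ _ => mem_range_abRay_of_inv_mul_mem_Sgen z

lemma rayFun_one (z : Multiplicative (ZMod 2)) : rayFun α z 1 = 1 := by
  rw [rayFun, Set.indicator_of_mem (show (1 : Gamma2) ∈ Set.range (abRay z) from ⟨0, rfl⟩),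
    wl_one, pow_zero]

lemma rayFun_nonneg (hα : α ≤ 1) (z : Multiplicative (ZMod 2)) (x : Gamma2) :
    0 ≤ rayFun α z x :=
  Set.indicator_nonneg (fun _ _ => pow_nonneg (inv_nonneg.2 (by linarith)) _) x

lemma rayFun_z0_ne_rayFun_z1 (hα : α ≠ 1) : rayFun α z0 ≠ rayFun α z1 := by
  intro h
  have hnotMem : abRay z1 1 ∉ Set.range (abRay z0) := by
    rintro ⟨_ | n, hn⟩
    exacts [absurd (congrArg Prod.snd hn) (by decide : (1 : Multiplicative (ZMod 2)) ≠ z1),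
      absurd (congrArg Prod.snd hn) (by decide : z0 ≠ z1)]
  have := congrFun h (abRay z1 1)
  rw [rayFun, rayFun, Set.indicator_of_notMem hnotMem,
    Set.indicator_of_mem (Set.mem_range_self 1)] at this
  exact pow_ne_zero _ (inv_ne_zero fun ht => hα (by linarith)) this.symm

end RayFun

theorem nonminimal_infty_harmonic_on_F2_times_Z2_general
    (α : ℝ) (hα1 : α < 1) :
    InfHarmonic2 α (h0fun α) ∧ h0fun α 1 = 1 ∧
    InfHarmonic2 α (h1fun α) ∧ h1fun α 1 = 1 ∧
    InfHarmonic2 α (h2fun α) ∧ h2fun α 1 = 1 ∧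
    ¬ MinimalInfHarmonic2 α (h2fun α) := by
  have h2fun_eq : h2fun α = fun x => (rayFun α z0 x + rayFun α z1 x) / 2 := by
    rw [← h0fun_eq_rayFun, ← h1fun_eq_rayFun]
    rfl
  have harmonic := infHarmonic2_rayFun hα1.ne
  rw [h2fun_eq, h0fun_eq_rayFun, h1fun_eq_rayFun]
  refine ⟨harmonic z0, rayFun_one z0, harmonic z1, rayFun_one z1,
    ((harmonic z0).add (harmonic z1)).div_const 2, by norm_num [rayFun_one], ?_⟩
  exact not_minimalInfHarmonic2_midpoint (harmonic z0) (rayFun_nonneg hα1.le z0)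
    (rayFun_nonneg hα1.le z1) (rayFun_one z0) (rayFun_one z1) (rayFun_z0_ne_rayFun_z1 hα1.ne)

theorem nonminimal_infty_harmonic_on_F2_times_Z2
    (α : ℝ) (hα0 : 0 < α) (hα1 : α < 1) :
    InfHarmonic2 α (h0fun α) ∧ h0fun α 1 = 1 ∧
    InfHarmonic2 α (h1fun α) ∧ h1fun α 1 = 1 ∧
    InfHarmonic2 α (h2fun α) ∧ h2fun α 1 = 1 ∧
    ¬ MinimalInfHarmonic2 α (h2fun α) :=
  nonminimal_infty_harmonic_on_F2_times_Z2_general α hα1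
end
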